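/- arXiv:2401.01190 — 2 statements merged into one kernel-verified Lean document; each statement's English description precedes it below -/
import Mathlib

section
/- For every pairwise reciprocal matrix A of size n, the matrix Ḡ is singular (i.e., not invertible) if and only if A is perfectly consistent, meaning A i j · A j k = A i k for all i, j, k. -/
open Matrix BigOperators

/-- A pairwise reciprocal matrix (PRM): all entries positive and `A i j * A j i = 1`. -/
def IsPRM {n : ℕ} (A : Matrix (Fin n) (Fin n) ℝ) : Prop :=
  ∀ i j, 0 < A i j ∧ A i j * A j i = 1

/-- The matrix `Ḡ` with diagonal `(n-1) + ∑_{k ≠ i} (A k i)^2` and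
off-diagonal `-(A i j + A j i)`. -/
noncomputable def Gbar {n : ℕ} (A : Matrix (Fin n) (Fin n) ℝ) :
    Matrix (Fin n) (Fin n) ℝ :=
  Matrix.of fun i j =>
    if i = j then ((n : ℝ) - 1) + ∑ k ∈ Finset.univ.filter (fun k => k ≠ i), (A k i) ^ 2
    else -(A i j + A j i)

/-- The all-ones matrix `J`. -/
noncomputable def Jmat (n : ℕ) : Matrix (Fin n) (Fin n) ℝ :=
  Matrix.of fun _ _ => 1

/-- `G = Ḡ + J`. -/
noncomputable def Gmat {n : ℕ} (A : Matrix (Fin n) (Fin n) ℝ) :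
    Matrix (Fin n) (Fin n) ℝ :=
  Gbar A + Jmat n

/-- The weighted least squares objective `f(w) = ∑ i ∑ j (w i - A i j * w j)^2`. -/
noncomputable def wls {n : ℕ} (A : Matrix (Fin n) (Fin n) ℝ) (w : Fin n → ℝ) : ℝ :=
  ∑ i, ∑ j, (w i - A i j * w j) ^ 2

lemma IsPRM.diag_one {n : ℕ} {A : Matrix (Fin n) (Fin n) ℝ} (hA : IsPRM A) (i : Fin n) :
    A i i = 1 := by
  rcases mul_self_eq_one_iff.mp (hA i i).2 with h | h
  · exact h
  · nlinarith [(hA i i).1]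

/-- `Ḡ` as a difference of a diagonal matrix and a symmetric matrix. -/
lemma Gbar_eq {n : ℕ} {A : Matrix (Fin n) (Fin n) ℝ} (hA : IsPRM A) :
    Gbar A = Matrix.diagonal (fun i => (n : ℝ) + ∑ k, (A k i) ^ 2)
      - Matrix.of (fun i j => A i j + A j i) := by
  ext i j
  by_cases h : i = j
  · subst h
    simp only [Gbar, Matrix.of_apply, Matrix.sub_apply, Matrix.diagonal_apply_eq]
    rw [if_pos trivial]
    have hfe : (Finset.univ.filter (fun k => k ≠ i)) = Finset.univ.erase i := by
      ext k; simp [Finset.mem_erase, and_comm]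
    rw [hfe, Finset.sum_erase_eq_sub (Finset.mem_univ i), hA.diag_one i]
    ring
  · simp only [Gbar, Matrix.of_apply, if_neg h, Matrix.sub_apply,
      Matrix.diagonal_apply_ne _ h]
    ring

/-- The quadratic form of `Ḡ` is the WLS objective. -/
lemma quad_eq_wls {n : ℕ} {A : Matrix (Fin n) (Fin n) ℝ} (hA : IsPRM A) (w : Fin n → ℝ) :
    w ⬝ᵥ (Gbar A *ᵥ w) = wls A w := by
  rw [Gbar_eq hA, Matrix.sub_mulVec, dotProduct_sub]
  have h1 : w ⬝ᵥ (Matrix.diagonal (fun i => (n : ℝ) + ∑ k, (A k i) ^ 2) *ᵥ w)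
      = (∑ i, (n : ℝ) * w i ^ 2) + ∑ i, ∑ k, (A k i) ^ 2 * w i ^ 2 := by
    simp only [dotProduct, Matrix.mulVec_diagonal]
    rw [← Finset.sum_add_distrib]
    refine Finset.sum_congr rfl fun i _ => ?_
    have e : w i * (((n : ℝ) + ∑ k, (A k i) ^ 2) * w i)
        = (n : ℝ) * w i ^ 2 + (∑ k, (A k i) ^ 2) * w i ^ 2 := by ring
    rw [e, Finset.sum_mul]
  have h2 : w ⬝ᵥ (Matrix.of (fun i j => A i j + A j i) *ᵥ w)
      = ∑ i, ∑ j, (A i j * (w i * w j) + A j i * (w i * w j)) := by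
    simp only [dotProduct, Matrix.mulVec, Matrix.of_apply, Finset.mul_sum]
    exact Finset.sum_congr rfl fun i _ => Finset.sum_congr rfl fun j _ => by ring
  rw [h1, h2]
  have h3 : wls A w = ((∑ i, (n : ℝ) * w i ^ 2) + ∑ i, ∑ j, A i j ^ 2 * w j ^ 2)
      - ∑ i, ∑ j, (A i j * (w i * w j) + A i j * (w i * w j)) := by
    unfold wls
    rw [← Finset.sum_add_distrib, ← Finset.sum_sub_distrib]
    refine Finset.sum_congr rfl fun i _ => ?_
    have e : (∑ _j : Fin n, w i ^ 2) = (n : ℝ) * w i ^ 2 := by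
      simp [Finset.sum_const, Finset.card_univ, nsmul_eq_mul]
    rw [← e, ← Finset.sum_add_distrib, ← Finset.sum_sub_distrib]
    exact Finset.sum_congr rfl fun j _ => by ring
  rw [h3]
  have d : ∀ (f g : Fin n → Fin n → ℝ), (∑ i, ∑ j, (f i j + g i j))
      = (∑ i, ∑ j, f i j) + (∑ i, ∑ j, g i j) := fun f g => by
    rw [← Finset.sum_add_distrib]
    exact Finset.sum_congr rfl fun i _ => Finset.sum_add_distrib
  have c1 : (∑ i, ∑ j, A j i * (w i * w j)) = ∑ i, ∑ j, A i j * (w i * w j) := by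
    rw [Finset.sum_comm]
    exact Finset.sum_congr rfl fun i _ => Finset.sum_congr rfl fun j _ => by ring
  have c2 : (∑ i, ∑ j, A i j ^ 2 * w j ^ 2) = ∑ i, ∑ k, A k i ^ 2 * w i ^ 2 :=
    Finset.sum_comm
  rw [d, d, c1, c2]

/-- For every PRM `A`, `Ḡ` is singular iff `A` is perfectly consistent,
i.e. `A i j * A j k = A i k` for all `i j k`. -/
theorem Gbar_singular_iff_consistent {n : ℕ} (hn : 1 ≤ n)
    (A : Matrix (Fin n) (Fin n) ℝ) (hA : IsPRM A) :
    ¬ IsUnit (Gbar A) ↔ ∀ i j k, A i j * A j k = A i k := by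
  constructor
  · intro hsing
    have hdet : (Gbar A).det = 0 := by
      by_contra h
      exact hsing ((Matrix.isUnit_iff_isUnit_det _).mpr (isUnit_iff_ne_zero.mpr h))
    obtain ⟨v, hv0, hv⟩ := Matrix.exists_mulVec_eq_zero_iff.mpr hdet
    have hwls : wls A v = 0 := by
      rw [← quad_eq_wls hA, hv, dotProduct_zero]
    have hterm : ∀ i j, v i = A i j * v j := by
      intro i j
      have h2 := (Finset.sum_eq_zero_iff_of_nonneg
        (fun i _ => Finset.sum_nonneg fun j _ => sq_nonneg _)).mp hwls i (Finset.mem_univ i)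
      have h3 := (Finset.sum_eq_zero_iff_of_nonneg
        (fun j _ => sq_nonneg _)).mp h2 j (Finset.mem_univ j)
      exact sub_eq_zero.mp (sq_eq_zero_iff.mp h3)
    obtain ⟨i0', hi0⟩ := Function.ne_iff.mp hv0
    have hvne : ∀ j, v j ≠ 0 := fun j h => hi0 (by rw [hterm i0' j, h, mul_zero]; rfl)
    intro i j k
    have hik : A i j * A j k * v k = A i k * v k := by
      rw [mul_assoc, ← hterm j k, ← hterm i j, hterm i k]
    exact mul_right_cancel₀ (hvne k) hik
  · intro hc
    set i0 : Fin n := ⟨0, hn⟩ with hi0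
    set w : Fin n → ℝ := fun i => A i i0 with hw
    have hker : Gbar A *ᵥ w = 0 := by
      funext i
      rw [Gbar_eq hA, Matrix.sub_mulVec]
      simp only [Pi.sub_apply, Pi.zero_apply, Matrix.mulVec_diagonal]
      simp only [Matrix.mulVec, dotProduct, Matrix.of_apply]
      have hrec : A i0 i * w i = 1 := by
        rw [hw]; simp only; rw [mul_comm]; exact (hA i i0).2
      have e1 : ∀ k, A k i ^ 2 * w i = w k ^ 2 * A i0 i := by
        intro k
        have hk : A k i = w k * A i0 i := (hc k i0 i).symm
        calc A k i ^ 2 * w i = w k ^ 2 * A i0 i * (A i0 i * w i) := by rw [hk]; ring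
        _ = w k ^ 2 * A i0 i := by rw [hrec, mul_one]
      have e2 : ∀ j, A i j * w j = w i := fun j => hc i j i0
      have e3 : ∀ j, A j i * w j = w j ^ 2 * A i0 i := by
        intro j
        have hj : A j i = w j * A i0 i := (hc j i0 i).symm
        rw [hj]; ring
      have lhs1 : ((n : ℝ) + ∑ k, A k i ^ 2) * w i
          = (n : ℝ) * w i + ∑ k, w k ^ 2 * A i0 i := by
        rw [add_mul, Finset.sum_mul]
        congr 1
        exact Finset.sum_congr rfl fun k _ => e1 k
      have lhs2 : ∑ j, (A i j + A j i) * w j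
          = (n : ℝ) * w i + ∑ j, w j ^ 2 * A i0 i := by
        have step : ∀ j, (A i j + A j i) * w j = w i + w j ^ 2 * A i0 i := by
          intro j
          rw [add_mul, e2 j, e3 j]
        rw [Finset.sum_congr rfl fun j _ => step j, Finset.sum_add_distrib]
        congr 1
        simp [Finset.sum_const, Finset.card_univ, nsmul_eq_mul]
      rw [lhs1, lhs2]
      ring
    have hwne : w ≠ 0 := by
      intro h
      have h1 : w i0 = 1 := hA.diag_one i0
      rw [h] at h1
      simp at h1
    have hdet : (Gbar A).det = 0 :=
      Matrix.exists_mulVec_eq_zero_iff.mp ⟨w, hwne, hker⟩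
    intro h
    exact isUnit_iff_ne_zero.mp ((Matrix.isUnit_iff_isUnit_det _).mp h) hdet
end

section
/- Let w : Fin n → ℝ satisfy w i > 0 for all i and ∑ᵢ w i = 1, and let A be the perfectly consistent PRM defined by A i j = w i / w j. Then G.mulVec w equals the all-ones vector; consequently G⁻¹.mulVec 1 = w and ∑ᵢ ∑ⱼ (G⁻¹) i j = 1, so the Pseudo-Inverse-Gram-Matrix prioritization applied to A returns exactly w. -/
open Matrix BigOperators

/-!
When `A` has unit diagonal, the quadratic form of `Ḡ` is the least-squares objective
`wls A x = ∑ i j (x i - A i j * x j)²`, so `Ḡ` is positive semidefinite and `G = Ḡ + J` has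
quadratic form `wls A x + (∑ i, x i)²`. A zero of `wls A` satisfies `x = x j • A.col j` for every
`j`; if moreover `∑ i, x i = 0`, positivity of the columns forces `x = 0`, so `G` is positive
definite for every PRM. For the consistent matrix `A i j = w i / w j` we have `wls A w = 0`, hence
`Ḡ w = 0` and `G w = J w = (∑ i, w i) • 1 = 1`.
-/

section GramMatrix

variable {n : ℕ} {A : Matrix (Fin n) (Fin n) ℝ}

lemma IsPRM.diag_eq_one (hA : IsPRM A) (i : Fin n) : A i i = 1 := by
  obtain ⟨hpos, hmul⟩ := hA i i
  nlinarith

lemma Gbar_isHermitian (A : Matrix (Fin n) (Fin n) ℝ) : (Gbar A).IsHermitian := by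
  refine Matrix.IsHermitian.ext fun i j => ?_
  rcases eq_or_ne i j with rfl | hij
  · rfl
  · simp [Gbar, hij, hij.symm, add_comm]

lemma Gbar_eq_of_diag_eq_one (hdiag : ∀ i, A i i = 1) :
    Gbar A = diagonal (fun i => (n : ℝ) + ∑ k, A k i ^ 2) - A - Aᵀ := by
  ext i j
  rcases eq_or_ne i j with rfl | hij
  · simp only [Gbar, of_apply, ↓reduceIte, Finset.filter_ne', Finset.mem_univ,
      Finset.sum_erase_eq_sub, hdiag, Matrix.sub_apply, diagonal_apply_eq, transpose_apply]
    ring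
  · simp only [Gbar, of_apply, hij, ↓reduceIte, Matrix.sub_apply, diagonal_apply_ne _ hij,
      transpose_apply]
    ring

lemma dotProduct_Gbar_mulVec (hdiag : ∀ i, A i i = 1) (x : Fin n → ℝ) :
    x ⬝ᵥ Gbar A *ᵥ x = wls A x := by
  set d : Fin n → ℝ := fun i => (n : ℝ) + ∑ k, A k i ^ 2
  have hd : x ⬝ᵥ diagonal d *ᵥ x = ∑ i, d i * x i ^ 2 := by
    simp only [dotProduct, mulVec_diagonal]
    exact Finset.sum_congr rfl fun i _ => by ring
  have htrans : x ⬝ᵥ Aᵀ *ᵥ x = x ⬝ᵥ A *ᵥ x := by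
    rw [dotProduct_mulVec, vecMul_transpose, dotProduct_comm]
  have hsq : ∑ i, ∑ j, (A i j * x j) ^ 2 = ∑ j, (∑ i, A i j ^ 2) * x j ^ 2 := by
    rw [Finset.sum_comm]
    simp only [mul_pow, Finset.sum_mul]
  calc x ⬝ᵥ Gbar A *ᵥ x = ∑ i, d i * x i ^ 2 - 2 * (x ⬝ᵥ A *ᵥ x) := by
        rw [Gbar_eq_of_diag_eq_one hdiag, sub_mulVec, sub_mulVec, dotProduct_sub, dotProduct_sub,
          htrans, hd]
        ring
    _ = wls A x := by
        simp only [wls, d, sub_sq, Finset.sum_add_distrib, Finset.sum_sub_distrib, hsq, add_mul,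
          dotProduct, mulVec, Finset.mul_sum, Finset.sum_const, Finset.card_univ,
          Fintype.card_fin, nsmul_eq_mul, mul_assoc]
        ring

lemma Jmat_mulVec (x : Fin n → ℝ) : Jmat n *ᵥ x = fun _ => ∑ i, x i := by
  ext
  simp [Jmat, mulVec, dotProduct]

lemma Jmat_isHermitian : (Jmat n).IsHermitian :=
  Matrix.IsHermitian.ext fun _ _ => rfl

lemma dotProduct_Gmat_mulVec (hdiag : ∀ i, A i i = 1) (x : Fin n → ℝ) :
    x ⬝ᵥ Gmat A *ᵥ x = wls A x + (∑ i, x i) ^ 2 := by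
  rw [Gmat, add_mulVec, dotProduct_add, dotProduct_Gbar_mulVec hdiag, Jmat_mulVec]
  simp [dotProduct, ← Finset.sum_mul, sq]

lemma wls_nonneg (A : Matrix (Fin n) (Fin n) ℝ) (x : Fin n → ℝ) : 0 ≤ wls A x :=
  Finset.sum_nonneg fun _ _ => Finset.sum_nonneg fun _ _ => sq_nonneg _

lemma wls_eq_zero_iff {x : Fin n → ℝ} : wls A x = 0 ↔ ∀ i j, x i = A i j * x j := by
  simp only [wls, Finset.sum_eq_zero_iff_of_nonneg (fun _ _ => Finset.sum_nonneg
    fun _ _ => sq_nonneg _), Finset.sum_eq_zero_iff_of_nonneg (fun _ _ => sq_nonneg _),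
    Finset.mem_univ, true_implies, pow_eq_zero_iff two_ne_zero, sub_eq_zero]

lemma eq_zero_of_forall_eq_mul_of_sum_eq_zero (hpos : ∀ i j, 0 < A i j) {x : Fin n → ℝ}
    (h : ∀ i j, x i = A i j * x j) (hsum : ∑ i, x i = 0) : x = 0 := by
  ext j
  have hcol : 0 < ∑ i, A i j := Finset.sum_pos (fun i _ => hpos i j) ⟨j, Finset.mem_univ j⟩
  have : (∑ i, A i j) * x j = 0 := by
    rw [Finset.sum_mul, ← hsum]
    exact Finset.sum_congr rfl fun i _ => (h i j).symm
  exact (mul_eq_zero.mp this).resolve_left hcol.ne'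

lemma Gbar_posSemidef (hdiag : ∀ i, A i i = 1) : (Gbar A).PosSemidef :=
  .of_dotProduct_mulVec_nonneg (Gbar_isHermitian A) fun x => by
    simpa [dotProduct_Gbar_mulVec hdiag] using wls_nonneg A x

theorem Gmat_posDef (hA : IsPRM A) : (Gmat A).PosDef := by
  refine .of_dotProduct_mulVec_pos ((Gbar_isHermitian A).add Jmat_isHermitian) fun x hx => ?_
  rw [star_trivial, dotProduct_Gmat_mulVec hA.diag_eq_one]
  by_contra! hle
  have hwls : wls A x = 0 := by nlinarith [wls_nonneg A x, sq_nonneg (∑ i, x i)]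
  have hsum : ∑ i, x i = 0 := by nlinarith [wls_nonneg A x, sq_nonneg (∑ i, x i)]
  exact hx (eq_zero_of_forall_eq_mul_of_sum_eq_zero (fun i j => (hA i j).1)
    (wls_eq_zero_iff.mp hwls) hsum)

lemma Gbar_mulVec_eq_zero (hdiag : ∀ i, A i i = 1) {x : Fin n → ℝ}
    (h : ∀ i j, x i = A i j * x j) : Gbar A *ᵥ x = 0 := by
  rw [← (Gbar_posSemidef hdiag).dotProduct_mulVec_zero_iff, star_trivial,
    dotProduct_Gbar_mulVec hdiag, wls_eq_zero_iff.mpr h]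

end GramMatrix

section Consistent

variable {n : ℕ} {A : Matrix (Fin n) (Fin n) ℝ} {w : Fin n → ℝ}

lemma isPRM_of_eq_div (hw : ∀ i, 0 < w i) (hA : ∀ i j, A i j = w i / w j) : IsPRM A :=
  fun i j => ⟨by rw [hA]; exact div_pos (hw i) (hw j), by
    rw [hA, hA, div_mul_div_comm, mul_comm (w j), div_self (mul_pos (hw i) (hw j)).ne']⟩

lemma eq_mul_of_eq_div (hw : ∀ i, 0 < w i) (hA : ∀ i j, A i j = w i / w j) (i j : Fin n) :
    w i = A i j * w j := by
  rw [hA, div_mul_cancel₀ _ (hw j).ne']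

lemma Gmat_mulVec_of_eq_div (hw : ∀ i, 0 < w i) (hA : ∀ i j, A i j = w i / w j) :
    Gmat A *ᵥ w = fun _ => ∑ i, w i := by
  rw [Gmat, add_mulVec, Gbar_mulVec_eq_zero (isPRM_of_eq_div hw hA).diag_eq_one
    (eq_mul_of_eq_div hw hA), zero_add, Jmat_mulVec]

end Consistent

theorem Gmat_mulVec_consistent_general {n : ℕ}
    (A : Matrix (Fin n) (Fin n) ℝ) (w : Fin n → ℝ)
    (hw : ∀ i, 0 < w i) (hsum : ∑ i, w i = 1)
    (hA : ∀ i j, A i j = w i / w j) :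
    (Gmat A).mulVec w = 1 ∧
    (Gmat A)⁻¹.mulVec 1 = w ∧
    ∑ i, ∑ j, (Gmat A)⁻¹ i j = 1 := by
  have hGw : Gmat A *ᵥ w = 1 := by
    rw [Gmat_mulVec_of_eq_div hw hA, hsum]
    rfl
  have hdet : IsUnit (Gmat A).det := (Gmat_posDef (isPRM_of_eq_div hw hA)).det_pos.ne'.isUnit
  have hGinv : (Gmat A)⁻¹ *ᵥ 1 = w := by
    rw [← hGw, mulVec_mulVec, nonsing_inv_mul _ hdet, one_mulVec]
  refine ⟨hGw, hGinv, ?_⟩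
  calc ∑ i, ∑ j, (Gmat A)⁻¹ i j = ∑ i, ((Gmat A)⁻¹ *ᵥ 1) i := by simp [mulVec, dotProduct]
    _ = 1 := by rw [hGinv, hsum]

/-- if `A i j = w i / w j` for a positive weight vector `w` summing to 1,
then `G.mulVec w = 1`, `G⁻¹.mulVec 1 = w` and `∑ i ∑ j (G⁻¹) i j = 1`, so the
Pseudo-IGM prioritization applied to `A` returns exactly `w`. -/
theorem Gmat_mulVec_consistent {n : ℕ} (hn : 1 ≤ n)
    (A : Matrix (Fin n) (Fin n) ℝ) (w : Fin n → ℝ)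
    (hw : ∀ i, 0 < w i) (hsum : ∑ i, w i = 1)
    (hA : ∀ i j, A i j = w i / w j) :
    (Gmat A).mulVec w = 1 ∧
    (Gmat A)⁻¹.mulVec 1 = w ∧
    ∑ i, ∑ j, (Gmat A)⁻¹ i j = 1 :=
  Gmat_mulVec_consistent_general A w hw hsum hA
end
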